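/- Let θ be an infinite cardinal, P a θ-directed poset, and P* a subposet of P that is θ₀-cofinal for every θ₀ < θ. Let I be a partial order such that for every i ∈ I, the set {j ∈ I : j < i} has cardinality less than θ, and let ⟨p_i : i ∈ I⟩ be a monotone diagram in P. Then there exists a cofinal subset I₀ ⊆ I and a monotone diagram ⟨q_i : i ∈ I₀⟩ in P* such that p_i ≤ q_i for all i ∈ I₀. -/

import Mathlib

/-!
Well-order `I` arbitrarily and keep those `i` that lie below no earlier element: this set `I₀` is
cofinal, and on it the strict order refines the well-order, so it is well-founded. By
well-founded recursion on `I₀`, each `q_i` is chosen in `P*` above `p_i` and above the fewer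
than `θ` values `q_j` with `j < i`: first bound these `< θ` elements in `P` using that `P` is
`θ`-directed, then lift the bound into `P*` using `θ₀`-cofinality for `θ₀ = #{j // j < i}`.
-/

open Cardinal

universe u v

/-- A preorder is `θ`-directed if every subset of cardinality `< θ` has an upper bound. -/
def IsCardDirected (θ : Cardinal.{u}) (J : Type u) [Preorder J] : Prop :=
  ∀ S : Set J, #S < θ → ∃ b, ∀ s ∈ S, s ≤ b

/-- `θ`-cofinality of a subposet `e : Q → P`. -/
def IsThetaCofinal (θ : Cardinal.{u}) {P Q : Type u} [PartialOrder P] [PartialOrder Q]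
    (e : Q → P) : Prop :=
  ∀ (p : P) (ι : Type u), #ι = θ → ∀ f : ι → Q,
    (∀ i, e (f i) ≤ p) → ∃ q : Q, p ≤ e q ∧ ∀ i, f i ≤ q

theorem exists_isCofinal_wellFoundedLT (I : Type u) [PartialOrder I] :
    ∃ I₀ : Set I, IsCofinal I₀ ∧ WellFoundedLT I₀ := by
  classical
  have hwf : WellFounded (WellOrderingRel (α := I)) := WellOrderingRel.isWellOrder.wf
  refine ⟨{i | ∀ j, WellOrderingRel j i → ¬ i ≤ j}, fun i => ?_, ⟨?_⟩⟩
  · induction i using hwf.induction with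
    | _ i ih =>
      by_cases hi : ∀ j, WellOrderingRel j i → ¬ i ≤ j
      · exact ⟨i, hi, le_rfl⟩
      · push Not at hi
        obtain ⟨j, hji, hij⟩ := hi
        obtain ⟨k, hk, hjk⟩ := ih j hji
        exact ⟨k, hk, hij.trans hjk⟩
  · refine Subrelation.wf (fun {a b} hab => ?_) (InvImage.wf Subtype.val hwf)
    rcases trichotomous_of WellOrderingRel (a : I) b with h | h | h
    · exact h
    · exact absurd (Subtype.ext h) hab.ne
    · exact absurd hab.le (a.2 _ h)

theorem exists_monotone_of_wellFoundedLT {J : Type u} {Q : Type v} [PartialOrder J]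
    [WellFoundedLT J] [Preorder Q] (R : J → Q → Prop)
    (hstep : ∀ i (g : ∀ j, j < i → Q), ∃ q, R i q ∧ ∀ j (h : j < i), g j h ≤ q) :
    ∃ q : J → Q, Monotone q ∧ ∀ i, R i (q i) := by
  choose F hF using hstep
  let q : J → Q := wellFounded_lt.fix F
  have hq : ∀ i, q i = F i (fun j _ => q j) := wellFounded_lt.fix_eq F
  refine ⟨q, fun i j hij => ?_, fun i => hq i ▸ (hF i _).1⟩
  rcases hij.eq_or_lt with rfl | hlt
  · exact le_rfl
  · rw [hq j]
    exact (hF j fun k _ => q k).2 i hlt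

theorem IsCardDirected.exists_le_of_isThetaCofinal {θ : Cardinal.{u}} (hθ : ℵ₀ ≤ θ)
    {P Q : Type u} [PartialOrder P] [PartialOrder Q] {e : Q → P}
    (hdir : IsCardDirected θ P) (hcof : ∀ θ₀ < θ, IsThetaCofinal θ₀ e)
    (a : P) {ι : Type u} (hι : #ι < θ) (f : ι → Q) :
    ∃ q, a ≤ e q ∧ ∀ i, f i ≤ q := by
  have hS : #(insert a (Set.range (e ∘ f)) : Set P) < θ :=
    calc #(insert a (Set.range (e ∘ f)) : Set P)
        ≤ #(Set.range (e ∘ f)) + 1 := mk_insert_le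
      _ ≤ #ι + 1 := add_le_add mk_range_le le_rfl
      _ < θ := add_lt_of_lt hθ hι (one_lt_aleph0.trans_le hθ)
  obtain ⟨b, hb⟩ := hdir _ hS
  obtain ⟨q, hbq, hfq⟩ :=
    hcof _ hι b ι rfl f fun i => hb _ (Set.mem_insert_of_mem _ ⟨i, rfl⟩)
  exact ⟨q, (hb a (Set.mem_insert _ _)).trans hbq, hfq⟩

theorem stmt7_general (θ : Cardinal.{u}) (hθ : ℵ₀ ≤ θ) {P Q : Type u}
    [PartialOrder P] [PartialOrder Q]
    (e : Q → P)
    (hdir : IsCardDirected θ P)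
    (hcof : ∀ θ₀ < θ, IsThetaCofinal θ₀ e)
    {I : Type u} [PartialOrder I]
    (hI : ∀ i : I, #{j : I // j < i} < θ)
    (p : I → P) :
    ∃ (I₀ : Set I) (q : I₀ → Q),
      (∀ i : I, ∃ j ∈ I₀, i ≤ j) ∧
      (∀ i j : I₀, (i : I) ≤ (j : I) → q i ≤ q j) ∧
      (∀ i : I₀, p i ≤ e (q i)) := by
  obtain ⟨I₀, hcofinal, hwf⟩ := exists_isCofinal_wellFoundedLT I
  have hstep : ∀ (i : I₀) (g : ∀ j, j < i → Q),
      ∃ q, p i ≤ e q ∧ ∀ j (h : j < i), g j h ≤ q := by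
    intro i g
    have hsmall : #{j : I₀ // j < i} < θ :=
      (mk_le_of_injective (f := fun j : {j : I₀ // j < i} => (⟨j.1, j.2⟩ : {j : I // j < i}))
        fun _ _ hab => Subtype.ext (Subtype.ext (Subtype.mk.inj hab))).trans_lt (hI i)
    obtain ⟨q, hpq, hgq⟩ :=
      hdir.exists_le_of_isThetaCofinal hθ hcof (p i) hsmall (fun j => g j.1 j.2)
    exact ⟨q, hpq, fun j h => hgq ⟨j, h⟩⟩
  obtain ⟨q, hqmono, hpq⟩ := exists_monotone_of_wellFoundedLT _ hstep
  exact ⟨I₀, q, hcofinal, fun i j => @hqmono i j, hpq⟩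

/-- Given a `θ`-directed poset `P`, a `(<θ)`-cofinal subposet `P*`, a poset `I` all of whose
strict initial segments have size `< θ`, and a monotone diagram `⟨p_i : i ∈ I⟩` in `P`, there
is a cofinal `I₀ ⊆ I` and a monotone diagram `⟨q_i : i ∈ I₀⟩` in `P*` with `p_i ≤ q_i`. -/
theorem stmt7 (θ : Cardinal.{u}) (hθ : ℵ₀ ≤ θ) {P Q : Type u}
    [PartialOrder P] [PartialOrder Q]
    (e : Q → P) (hinj : Function.Injective e) (hmono : ∀ x y : Q, x ≤ y → e x ≤ e y)
    (hdir : IsCardDirected θ P)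
    (hcof : ∀ θ₀ < θ, IsThetaCofinal θ₀ e)
    {I : Type u} [PartialOrder I]
    (hI : ∀ i : I, #{j : I // j < i} < θ)
    (p : I → P) (hp : Monotone p) :
    ∃ (I₀ : Set I) (q : I₀ → Q),
      (∀ i : I, ∃ j ∈ I₀, i ≤ j) ∧
      (∀ i j : I₀, (i : I) ≤ (j : I) → q i ≤ q j) ∧
      (∀ i : I₀, p i ≤ e (q i)) :=
  stmt7_general θ hθ e hdir hcof hI p
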